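/- arXiv:2012.01998 — 2 statements merged into one kernel-verified Lean document; each statement's English description precedes it below -/
import Mathlib

section
/- Let H be a finite-dimensional complex Hilbert space, |T⟩ ∈ H a unit vector, and M_0, …, M_{n-1} Kraus operators (∑_i M_i† M_i = I) satisfying M_i |T⟩ = z_i |T⟩ for complex numbers z_i. Then for every density operator ρ on H the fidelity increment admits the sum-of-squares representation F($(ρ), T) − F(ρ, T) = ∑_i ‖A_i |T⟩‖², where A_i = √ρ (I − |T⟩⟨T|) M_i† and $(ρ) = ∑_i M_i ρ M_i†. -/
open Matrix Complex ComplexOrder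

/-!
Write `u i = (M i)ᴴ *ᵥ T`. Since `M i` fixes the ray of `T`, the projection `1 - |T⟩⟨T|` sends
`u i` to `u i - conj (z i) • T`, so the `i`-th square is the `ρ`-quadratic form of that vector.
The Kraus relation gives `∑ i, z i • u i = T` and `∑ i, |z i|² = 1`; completing the square then
turns the sum of the quadratic forms into `∑ i, ⟨u i, ρ u i⟩ - ⟨T, ρ T⟩`, which is the fidelity
increment.
-/

namespace Matrix

section StarRing

variable {R m ι : Type*} [CommRing R] [StarRing R] [Fintype m] [Fintype ι]

theorem one_sub_vecMulVec_mulVec [DecidableEq m] (T x : m → R) :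
    (1 - vecMulVec T (star T)) *ᵥ x = x - (star T ⬝ᵥ x) • T := by
  rw [sub_mulVec, one_mulVec, vecMulVec_mulVec, op_smul_eq_smul]

theorem star_conjTranspose_mulVec_dotProduct_mulVec (M ρ : Matrix m m R) (x : m → R) :
    star (Mᴴ *ᵥ x) ⬝ᵥ (ρ *ᵥ (Mᴴ *ᵥ x)) = star x ⬝ᵥ ((M * ρ * Mᴴ) *ᵥ x) := by
  rw [star_mulVec, conjTranspose_conjTranspose, ← dotProduct_mulVec, mulVec_mulVec,
    mulVec_mulVec, Matrix.mul_assoc]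

theorem sum_star_sub_smul_dotProduct_mulVec_sub_smul (ρ : Matrix m m R) {T : m → R}
    {u : ι → m → R} {z : ι → R} (hu : ∑ i, z i • u i = T) (hz : ∑ i, star (z i) * z i = 1) :
    ∑ i, star (u i - star (z i) • T) ⬝ᵥ (ρ *ᵥ (u i - star (z i) • T)) =
      ∑ i, star (u i) ⬝ᵥ (ρ *ᵥ u i) - star T ⬝ᵥ (ρ *ᵥ T) := by
  have hleft : ∑ i, star (z i) * (star (u i) ⬝ᵥ (ρ *ᵥ T)) = star T ⬝ᵥ (ρ *ᵥ T) := by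
    simp_rw [← smul_eq_mul, ← smul_dotProduct, ← star_smul, ← sum_dotProduct, ← star_sum, hu]
  have hright : ∑ i, z i * (star T ⬝ᵥ (ρ *ᵥ u i)) = star T ⬝ᵥ (ρ *ᵥ T) := by
    simp_rw [← smul_eq_mul, ← dotProduct_smul, ← mulVec_smul, ← dotProduct_sum, ← mulVec_sum, hu]
  have hexpand (i : ι) : star (u i - star (z i) • T) ⬝ᵥ (ρ *ᵥ (u i - star (z i) • T)) =
      star (u i) ⬝ᵥ (ρ *ᵥ u i) - star (z i) * (star (u i) ⬝ᵥ (ρ *ᵥ T)) -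
        z i * (star T ⬝ᵥ (ρ *ᵥ u i)) + star (z i) * z i * (star T ⬝ᵥ (ρ *ᵥ T)) := by
    simp only [star_sub, star_smul, star_star, mulVec_sub, mulVec_smul, sub_dotProduct,
      dotProduct_sub, smul_dotProduct, dotProduct_smul, smul_eq_mul]
    ring
  simp_rw [hexpand, Finset.sum_add_distrib, Finset.sum_sub_distrib, ← Finset.sum_mul, hleft,
    hright, hz]
  ring

theorem sum_smul_conjTranspose_mulVec_of_mulVec_eq_smul [DecidableEq m] {T : m → R}
    {M : ι → Matrix m m R} (hM : ∑ i, (M i)ᴴ * M i = 1) {z : ι → R}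
    (hz : ∀ i, M i *ᵥ T = z i • T) :
    ∑ i, z i • ((M i)ᴴ *ᵥ T) = T := by
  simp_rw [← mulVec_smul, ← hz, mulVec_mulVec, ← sum_mulVec, hM, one_mulVec]

variable {T : m → R} (hT : star T ⬝ᵥ T = 1)
include hT

theorem star_dotProduct_conjTranspose_mulVec_of_mulVec_eq_smul {M : Matrix m m R} {z : R}
    (hz : M *ᵥ T = z • T) : star T ⬝ᵥ (Mᴴ *ᵥ T) = star z := by
  rw [dotProduct_mulVec, ← star_mulVec, hz, star_smul, smul_dotProduct, hT, smul_eq_mul, mul_one]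

theorem sum_star_mul_self_eq_one_of_mulVec_eq_smul [DecidableEq m] {M : ι → Matrix m m R}
    (hM : ∑ i, (M i)ᴴ * M i = 1) {z : ι → R} (hz : ∀ i, M i *ᵥ T = z i • T) :
    ∑ i, star (z i) * z i = 1 := by
  have hterm (i : ι) : star T ⬝ᵥ (((M i)ᴴ * M i) *ᵥ T) = star (z i) * z i := by
    rw [← mulVec_mulVec, hz, mulVec_smul, dotProduct_smul,
      star_dotProduct_conjTranspose_mulVec_of_mulVec_eq_smul hT (hz i), smul_eq_mul, mul_comm]
  simp_rw [← hterm, ← dotProduct_sum, ← sum_mulVec, hM, one_mulVec, hT]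

theorem conjTranspose_mul_one_sub_vecMulVec_mulVec_of_mulVec_eq_smul [DecidableEq m]
    {M : Matrix m m R} {z : R} (hz : M *ᵥ T = z • T) :
    ((1 - vecMulVec T (star T)) * Mᴴ) *ᵥ T = Mᴴ *ᵥ T - star z • T := by
  rw [← mulVec_mulVec, one_sub_vecMulVec_mulVec,
    star_dotProduct_conjTranspose_mulVec_of_mulVec_eq_smul hT hz]

end StarRing

theorem ofReal_norm_equiv_symm_mulVec_sq {m 𝕜 : Type*} [Fintype m] [RCLike 𝕜]
    (S : Matrix m m 𝕜) (v : m → 𝕜) :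
    ((‖(EuclideanSpace.equiv m 𝕜).symm (S *ᵥ v)‖ : ℝ) : 𝕜) ^ 2 =
      star v ⬝ᵥ ((Sᴴ * S) *ᵥ v) := by
  rw [← inner_self_eq_norm_sq_to_K, EuclideanSpace.inner_eq_star_dotProduct, ← mulVec_mulVec,
    dotProduct_mulVec, ← star_mulVec]
  exact dotProduct_comm _ _

namespace PosSemidef

open scoped MatrixOrder

variable {n : Type*} [Fintype n] [DecidableEq n] {ρ : Matrix n n ℂ}

theorem sqrt_eq_eigenvectorUnitary_mul_diagonal (hρ : ρ.PosSemidef) :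
    CFC.sqrt ρ = hρ.1.eigenvectorUnitary.1 * diagonal ((↑) ∘ (Real.sqrt ·) ∘ hρ.1.eigenvalues) *
      (star hρ.1.eigenvectorUnitary : Matrix n n ℂ) := by
  rw [CFC.sqrt_eq_real_sqrt ρ hρ.nonneg, cfcₙ_eq_cfc, hρ.1.cfc_eq]
  rfl

theorem conjTranspose_sqrt_mul_sqrt (hρ : ρ.PosSemidef) : (CFC.sqrt ρ)ᴴ * CFC.sqrt ρ = ρ := by
  rw [← star_eq_conjTranspose, (CFC.sqrt_nonneg ρ).isSelfAdjoint.star_eq,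
    CFC.sqrt_mul_sqrt_self ρ hρ.nonneg]

end PosSemidef

end Matrix

theorem fidelity_increment_sum_of_squares_general {d n : ℕ}
    (M : Fin n → Matrix (Fin d) (Fin d) ℂ)
    (T : Fin d → ℂ) (hT : star T ⬝ᵥ T = 1)
    (hM : ∑ i, (M i)ᴴ * M i = 1)
    (z : Fin n → ℂ) (hz : ∀ i, M i *ᵥ T = z i • T)
    (ρ : Matrix (Fin d) (Fin d) ℂ) (hρ : ρ.PosSemidef) :
    star T ⬝ᵥ ((∑ i, M i * ρ * (M i)ᴴ) *ᵥ T) - star T ⬝ᵥ (ρ *ᵥ T) =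
      ∑ i, ((‖(EuclideanSpace.equiv (Fin d) ℂ).symm
        (((hρ.1.eigenvectorUnitary.1 * diagonal ((↑) ∘ (Real.sqrt ·) ∘ hρ.1.eigenvalues) *
          (star hρ.1.eigenvectorUnitary : Matrix (Fin d) (Fin d) ℂ)) *
          (1 - vecMulVec T (star T)) * (M i)ᴴ) *ᵥ T)‖ : ℝ) : ℂ) ^ 2 := by
  have hsquare {S : Matrix (Fin d) (Fin d) ℂ} (hS : Sᴴ * S = ρ) (i : Fin n) :
      ((‖(EuclideanSpace.equiv (Fin d) ℂ).symm
        ((S * (1 - vecMulVec T (star T)) * (M i)ᴴ) *ᵥ T)‖ : ℝ) : ℂ) ^ 2 =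
        star ((M i)ᴴ *ᵥ T - star (z i) • T) ⬝ᵥ (ρ *ᵥ ((M i)ᴴ *ᵥ T - star (z i) • T)) := by
    rw [Matrix.mul_assoc, ← mulVec_mulVec,
      conjTranspose_mul_one_sub_vecMulVec_mulVec_of_mulVec_eq_smul hT (hz i), ← hS]
    -- not `rw`: the lemma's `RCLike` coercion `ℝ → ℂ` is `Complex.ofReal` only up to unfolding
    exact ofReal_norm_equiv_symm_mulVec_sq S _
  rw [← hρ.sqrt_eq_eigenvectorUnitary_mul_diagonal,
    Finset.sum_congr rfl fun i _ => hsquare hρ.conjTranspose_sqrt_mul_sqrt i,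
    sum_star_sub_smul_dotProduct_mulVec_sub_smul ρ
      (sum_smul_conjTranspose_mulVec_of_mulVec_eq_smul hM hz)
      (sum_star_mul_self_eq_one_of_mulVec_eq_smul hT hM hz)]
  simp_rw [star_conjTranspose_mulVec_dotProduct_mulVec, ← dotProduct_sum, ← sum_mulVec]

/-- The fidelity increment of the channel `ρ ↦ ∑ i, M i * ρ * (M i)ᴴ` admits the sum-of-squares
representation `F($(ρ), T) − F(ρ, T) = ∑ i ‖A i *ᵥ T‖²` with
`A i = √ρ * (1 − |T⟩⟨T|) * (M i)ᴴ`, where `√ρ` is the positive semidefinite square root of `ρ`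
and `‖·‖` is the Euclidean norm. -/
theorem fidelity_increment_sum_of_squares {d n : ℕ}
    (M : Fin n → Matrix (Fin d) (Fin d) ℂ)
    (T : Fin d → ℂ) (hT : star T ⬝ᵥ T = 1)
    (hM : ∑ i, (M i)ᴴ * M i = 1)
    (z : Fin n → ℂ) (hz : ∀ i, M i *ᵥ T = z i • T)
    (ρ : Matrix (Fin d) (Fin d) ℂ) (hρ : ρ.PosSemidef) (hρtr : ρ.trace = 1) :
    star T ⬝ᵥ ((∑ i, M i * ρ * (M i)ᴴ) *ᵥ T) - star T ⬝ᵥ (ρ *ᵥ T) =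
      ∑ i, ((‖(EuclideanSpace.equiv (Fin d) ℂ).symm
        (((hρ.1.eigenvectorUnitary.1 * diagonal ((↑) ∘ (Real.sqrt ·) ∘ hρ.1.eigenvalues) *
          (star hρ.1.eigenvectorUnitary : Matrix (Fin d) (Fin d) ℂ)) *
          (1 - vecMulVec T (star T)) * (M i)ᴴ) *ᵥ T)‖ : ℝ) : ℂ) ^ 2 :=
  fidelity_increment_sum_of_squares_general M T hT hM z hz ρ hρ
end

section
/- Let S be the swap operator on ℂ^d ⊗ ℂ^d, let λ ∈ ℝ, let U = exp(−iλS), let |T⟩ ∈ ℂ^d be a unit vector, and define the channel $(ρ) = Tr_c[U (ρ ⊗ |T⟩_c⟨T|) U†]. Then for every density operator ρ on ℂ^d and every n ∈ ℕ, the target fidelity satisfies F($^n(ρ), T) = 1 − (1 − F(ρ, T)) cos^{2n}λ. In particular, if cos²λ < 1 then $^n(ρ) converges to |T⟩⟨T| as n → ∞. -/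
/-!
Since `S * S = 1`, `U = cos λ - i sin λ S`, and tracing out the ancilla turns the channel into the
linear map `σ ↦ cos²λ σ + i cos λ sin λ (σP - Pσ) + sin²λ tr(σ) P` with `P = |T⟩⟨T|`. This map
preserves the trace and sends the fidelity `f` of a trace-one `σ` to `cos²λ f + sin²λ`, which
gives the closed formula. It fixes `P`, and a traceless `X` splits into blocks with respect to the
idempotent `P`: the diagonal part `PXP + (1-P)X(1-P)` is an eigenvector for `cos²λ`, the
off-diagonal blocks `PX(1-P)` and `(1-P)XP` for `cos λ e^{∓iλ}`. All three eigenvalues have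
modulus `< 1` when `cos²λ < 1`, so the iterates converge to `P`.
-/

open Matrix Complex ComplexOrder NormedSpace Kronecker Filter

/-- The swap operator on `ℂ^d ⊗ ℂ^d`: `S (i,j) (k,l) = δ_{i,l} δ_{j,k}`, i.e.
`S = ∑_{i,j} |i⟩⟨j| ⊗ |j⟩⟨i|`. -/
def swapOp (d : ℕ) : Matrix (Fin d × Fin d) (Fin d × Fin d) ℂ :=
  Matrix.of fun p q => if p.1 = q.2 ∧ p.2 = q.1 then 1 else 0

/-- Partial trace over the controller (second) tensor factor. -/
noncomputable def ptraceControl {d : ℕ} (A : Matrix (Fin d × Fin d) (Fin d × Fin d) ℂ) :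
    Matrix (Fin d) (Fin d) ℂ :=
  Matrix.of fun i j => ∑ k, A (i, k) (j, k)

section InvolutionExp

variable {𝔸 : Type*} [Ring 𝔸] [Algebra ℂ 𝔸] [TopologicalSpace 𝔸] [IsTopologicalRing 𝔸]
  [ContinuousSMul ℂ 𝔸] [T2Space 𝔸]

theorem exp_mul_I_smul_of_mul_self_eq_one {a : 𝔸} (ha : a * a = 1) (θ : ℂ) :
    exp ((θ * I) • a) = cos θ • (1 : 𝔸) + (sin θ * I) • a := by
  have h_even (k : ℕ) : a ^ (2 * k) = 1 := by rw [pow_mul, sq, ha, one_pow]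
  rw [exp_eq_tsum ℂ]
  refine HasSum.tsum_eq (HasSum.even_add_odd ?_ ?_)
  · convert (hasSum_cos' θ).smul_const (1 : 𝔸) using 2 with k
    rw [smul_pow, h_even, smul_smul, div_eq_inv_mul]
  · convert ((hasSum_sin' θ).mul_right I).smul_const a using 2 with k
    rw [smul_pow, pow_succ a, h_even, one_mul, smul_smul, div_mul_cancel₀ _ I_ne_zero,
      div_eq_inv_mul]

end InvolutionExp

section SwapAndPartialTrace

variable {d : ℕ}

theorem swapOp_mul_self : swapOp d * swapOp d = 1 := by
  ext ⟨i, k⟩ ⟨j, l⟩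
  simp [swapOp, mul_apply, Fintype.sum_prod_type, one_apply, ite_and, Prod.ext_iff, eq_comm]

theorem conjTranspose_swapOp : (swapOp d)ᴴ = swapOp d := by
  ext ⟨i, k⟩ ⟨j, l⟩
  simp [swapOp, apply_ite (star : ℂ → ℂ), and_comm, eq_comm]

theorem exp_swapOp (l : ℝ) :
    exp ((-I * l) • swapOp d) = (Real.cos l : ℂ) • 1 - (Real.sin l * I : ℂ) • swapOp d := by
  rw [show -I * (l : ℂ) = (-l : ℂ) * I by ring, exp_mul_I_smul_of_mul_self_eq_one swapOp_mul_self,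
    cos_neg, sin_neg, ← ofReal_cos, ← ofReal_sin, neg_mul, neg_smul, sub_eq_add_neg]

theorem ptraceControl_sub (A B : Matrix (Fin d × Fin d) (Fin d × Fin d) ℂ) :
    ptraceControl (A - B) = ptraceControl A - ptraceControl B := by
  ext i j
  simp [ptraceControl, Finset.sum_sub_distrib]

theorem ptraceControl_smul (z : ℂ) (A : Matrix (Fin d × Fin d) (Fin d × Fin d) ℂ) :
    ptraceControl (z • A) = z • ptraceControl A := by
  ext i j
  simp [ptraceControl, Finset.mul_sum]

variable (σ B : Matrix (Fin d) (Fin d) ℂ)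

theorem ptraceControl_kronecker : ptraceControl (σ ⊗ₖ B) = B.trace • σ := by
  ext i j
  simp [ptraceControl, trace, Finset.mul_sum, mul_comm]

theorem ptraceControl_kronecker_mul_swapOp : ptraceControl ((σ ⊗ₖ B) * swapOp d) = σ * B := by
  ext i j
  simp [ptraceControl, mul_apply, swapOp, Fintype.sum_prod_type, ite_and]

theorem ptraceControl_swapOp_mul_kronecker : ptraceControl (swapOp d * (σ ⊗ₖ B)) = B * σ := by
  ext i j
  simp [ptraceControl, mul_apply, swapOp, Fintype.sum_prod_type, ite_and, mul_comm]

theorem ptraceControl_swapOp_mul_kronecker_mul_swapOp :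
    ptraceControl (swapOp d * (σ ⊗ₖ B) * swapOp d) = σ.trace • B := by
  ext i j
  simp [ptraceControl, mul_apply, swapOp, Fintype.sum_prod_type, ite_and, trace, Finset.sum_mul]

end SwapAndPartialTrace

theorem ofReal_cos_sq_add_ofReal_sin_sq (l : ℝ) :
    (Real.cos l : ℂ) ^ 2 + (Real.sin l : ℂ) ^ 2 = 1 := by
  exact_mod_cast Real.cos_sq_add_sin_sq l

section WeakSwapMap

variable {n : Type*} [Fintype n]

noncomputable def weakSwapMap (l : ℝ) (P : Matrix n n ℂ) : Module.End ℂ (Matrix n n ℂ) :=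
  (Real.cos l ^ 2 : ℂ) • LinearMap.id
    + (Real.cos l * Real.sin l * I : ℂ) • (LinearMap.mulRight ℂ P - LinearMap.mulLeft ℂ P)
    + (Real.sin l ^ 2 : ℂ) • (traceLinearMap n ℂ ℂ).smulRight P

theorem weakSwapMap_apply (l : ℝ) (P σ : Matrix n n ℂ) :
    weakSwapMap l P σ = (Real.cos l ^ 2 : ℂ) • σ
      + (Real.cos l * Real.sin l * I : ℂ) • (σ * P - P * σ)
      + (Real.sin l ^ 2 * σ.trace : ℂ) • P := by
  simp [weakSwapMap, mul_smul]

end WeakSwapMap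

theorem ptraceControl_exp_swapOp_conj_kronecker {d : ℕ} (l : ℝ) {B : Matrix (Fin d) (Fin d) ℂ}
    (hB : B.trace = 1) (σ : Matrix (Fin d) (Fin d) ℂ) :
    ptraceControl (exp ((-I * l) • swapOp d) * (σ ⊗ₖ B) * (exp ((-I * l) • swapOp d))ᴴ) =
      weakSwapMap l B σ := by
  rw [exp_swapOp]
  simp only [conjTranspose_sub, conjTranspose_smul, conjTranspose_one, conjTranspose_swapOp,
    sub_mul, mul_sub, smul_mul_assoc, mul_smul_comm, one_mul, mul_one, smul_sub, smul_smul,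
    ptraceControl_sub, ptraceControl_smul, ptraceControl_kronecker,
    ptraceControl_kronecker_mul_swapOp, ptraceControl_swapOp_mul_kronecker,
    ptraceControl_swapOp_mul_kronecker_mul_swapOp, hB, weakSwapMap_apply, star_mul',
    RCLike.star_def, conj_ofReal, conj_I]
  match_scalars <;> ring_nf
  rw [I_sq]
  ring

section Fidelity

variable {n : Type*} [Fintype n]

theorem trace_weakSwapMap (l : ℝ) {P : Matrix n n ℂ} (hP : P.trace = 1) (σ : Matrix n n ℂ) :
    (weakSwapMap l P σ).trace = σ.trace := by
  simp only [weakSwapMap_apply, trace_add, trace_smul, trace_sub, trace_mul_comm σ, sub_self, hP,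
    smul_eq_mul, mul_zero, mul_one, add_zero]
  linear_combination σ.trace * ofReal_cos_sq_add_ofReal_sin_sq l

theorem trace_vecMulVec_star_self (T : n → ℂ) :
    (vecMulVec T (star T)).trace = star T ⬝ᵥ T := by
  rw [trace_vecMulVec, dotProduct_comm]

variable {T : n → ℂ} (hT : star T ⬝ᵥ T = 1)
include hT

theorem dotProduct_weakSwapMap_mulVec (l : ℝ) (σ : Matrix n n ℂ) :
    star T ⬝ᵥ (weakSwapMap l (vecMulVec T (star T)) σ *ᵥ T) =
      Real.cos l ^ 2 * (star T ⬝ᵥ (σ *ᵥ T)) + Real.sin l ^ 2 * σ.trace := by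
  have hPT : vecMulVec T (star T) *ᵥ T = T := by simp [vecMulVec_mulVec, hT]
  have hTP : star T ᵥ* vecMulVec T (star T) = star T := by simp [vecMul_vecMulVec, hT]
  simp only [weakSwapMap_apply, add_mulVec, sub_mulVec, smul_mulVec, ← mulVec_mulVec, hPT,
    dotProduct_add, dotProduct_sub, dotProduct_smul, dotProduct_mulVec (star T), hTP, hT,
    sub_self, smul_eq_mul]
  ring

theorem dotProduct_weakSwapMap_pow_mulVec (l : ℝ) {σ : Matrix n n ℂ} (hσ : σ.trace = 1)
    (k : ℕ) :
    star T ⬝ᵥ ((weakSwapMap l (vecMulVec T (star T)) ^ k) σ *ᵥ T) =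
      1 - (1 - star T ⬝ᵥ (σ *ᵥ T)) * Real.cos l ^ (2 * k) := by
  have htr (k : ℕ) : ((weakSwapMap l (vecMulVec T (star T)) ^ k) σ).trace = 1 := by
    induction k with
    | zero => exact hσ
    | succ k ih =>
      rw [pow_succ', Module.End.mul_apply,
        trace_weakSwapMap l (by rw [trace_vecMulVec_star_self, hT]), ih]
  induction k with
  | zero => simp
  | succ k ih =>
    rw [pow_succ', Module.End.mul_apply, dotProduct_weakSwapMap_mulVec hT, ih, htr]
    linear_combination ofReal_cos_sq_add_ofReal_sin_sq l

end Fidelity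

section Eigen

theorem Module.End.pow_apply_of_apply_eq_smul {R M : Type*} [Semiring R] [AddCommMonoid M]
    [Module R M] {f : Module.End R M} {μ : R} {v : M} (h : f v = μ • v) (k : ℕ) :
    (f ^ k) v = μ ^ k • v := by
  induction k with
  | zero => simp
  | succ k ih => rw [pow_succ', Module.End.mul_apply, ih, map_smul, h, smul_smul, pow_succ]

variable {𝕜 M : Type*} [NormedField 𝕜] [AddCommGroup M] [Module 𝕜 M]

theorem Module.End.tendsto_pow_apply_of_apply_eq_smul [TopologicalSpace M] [ContinuousSMul 𝕜 M]
    {f : Module.End 𝕜 M} {μ : 𝕜} {v : M} (h : f v = μ • v) (hμ : ‖μ‖ < 1) :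
    Tendsto (fun k => (f ^ k) v) atTop (nhds 0) := by
  simpa only [pow_apply_of_apply_eq_smul h, zero_smul] using
    (tendsto_pow_atTop_nhds_zero_of_norm_lt_one hμ).smul_const v

end Eigen

section Convergence

variable {n : Type*} [Fintype n] (l : ℝ) {P : Matrix n n ℂ}

theorem weakSwapMap_apply_self (htr : P.trace = 1) : weakSwapMap l P P = P := by
  rw [weakSwapMap_apply, sub_self, smul_zero, add_zero, htr, mul_one, ← add_smul,
    ofReal_cos_sq_add_ofReal_sin_sq, one_smul]

theorem weakSwapMap_apply_of_mul_eq_self_of_mul_eq_zero {Y : Matrix n n ℂ} (hPY : P * Y = Y)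
    (hYP : Y * P = 0) : weakSwapMap l P Y = (Real.cos l * cexp (-l * I)) • Y := by
  have htr : Y.trace = 0 := by rw [← hPY, trace_mul_comm, hYP, trace_zero]
  rw [weakSwapMap_apply, hPY, hYP, htr, exp_mul_I, cos_neg, sin_neg, ← ofReal_cos, ← ofReal_sin]
  match_scalars <;> ring

theorem weakSwapMap_apply_of_mul_eq_zero_of_mul_eq_self {Z : Matrix n n ℂ} (hPZ : P * Z = 0)
    (hZP : Z * P = Z) : weakSwapMap l P Z = (Real.cos l * cexp (l * I)) • Z := by
  have htr : Z.trace = 0 := by rw [← hZP, trace_mul_comm, hPZ, trace_zero]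
  rw [weakSwapMap_apply, hPZ, hZP, htr, exp_mul_I, ← ofReal_cos, ← ofReal_sin]
  match_scalars <;> ring

theorem weakSwapMap_apply_of_commute {D : Matrix n n ℂ} (hPD : Commute P D) (htr : D.trace = 0) :
    weakSwapMap l P D = (Real.cos l ^ 2 : ℂ) • D := by
  rw [weakSwapMap_apply, hPD.eq, sub_self, htr]
  simp

variable {l} in
theorem norm_ofReal_cos_mul_exp_lt_one (hcos : Real.cos l ^ 2 < 1) (θ : ℝ) :
    ‖(Real.cos l : ℂ) * cexp (θ * I)‖ < 1 := by
  rw [norm_mul, norm_exp_ofReal_mul_I, mul_one, norm_real, Real.norm_eq_abs]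
  exact (sq_lt_one_iff_abs_lt_one _).mp hcos

theorem tendsto_weakSwapMap_pow_apply_of_trace_eq_zero [DecidableEq n]
    (hcos : Real.cos l ^ 2 < 1) (hP : P * P = P) {X : Matrix n n ℂ} (hX : X.trace = 0) :
    Tendsto (fun k => (weakSwapMap l P ^ k) X) atTop (nhds 0) := by
  set Q := 1 - P
  have hPQ : P * Q = 0 := by simp [Q, mul_sub, hP]
  have hQP : Q * P = 0 := by simp [Q, sub_mul, hP]
  have hQ : Q * Q = Q := by simp [Q, mul_sub, sub_mul, hP]
  have hdecomp : P * X * P + Q * X * Q + P * X * Q + Q * X * P = X := by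
    simp only [Q]
    noncomm_ring
  have hdiag_trace : (P * X * P + Q * X * Q).trace = 0 := by
    rw [trace_add, trace_mul_cycle, hP, trace_mul_cycle, hQ, ← trace_add, ← add_mul,
      add_sub_cancel, one_mul, hX]
  have hdiag_comm : Commute P (P * X * P + Q * X * Q) := by
    change P * (P * X * P + Q * X * Q) = (P * X * P + Q * X * Q) * P
    rw [mul_add, add_mul]
    simp only [← mul_assoc, hP, hPQ, zero_mul]
    simp only [mul_assoc, hP, hQP, mul_zero]
  have hdiag := Module.End.tendsto_pow_apply_of_apply_eq_smul
    (weakSwapMap_apply_of_commute l hdiag_comm hdiag_trace) (by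
      rw [norm_pow, norm_real, Real.norm_eq_abs, sq_abs]; exact hcos)
  have hoff₁ := Module.End.tendsto_pow_apply_of_apply_eq_smul
    (weakSwapMap_apply_of_mul_eq_self_of_mul_eq_zero l (P := P) (Y := P * X * Q)
      (by simp only [← mul_assoc, hP]) (by rw [mul_assoc, hQP, mul_zero]))
    (by simpa using norm_ofReal_cos_mul_exp_lt_one hcos (-l))
  have hoff₂ := Module.End.tendsto_pow_apply_of_apply_eq_smul
    (weakSwapMap_apply_of_mul_eq_zero_of_mul_eq_self l (P := P) (Z := Q * X * P)
      (by simp only [← mul_assoc, hPQ, zero_mul]) (by rw [mul_assoc, hP]))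
    (norm_ofReal_cos_mul_exp_lt_one hcos l)
  simpa only [← map_add, hdecomp, add_zero] using (hdiag.add hoff₁).add hoff₂

theorem tendsto_weakSwapMap_pow [DecidableEq n] (hcos : Real.cos l ^ 2 < 1) (hP : P * P = P)
    (hPtr : P.trace = 1) {σ : Matrix n n ℂ} (hσ : σ.trace = 1) :
    Tendsto (fun k => (weakSwapMap l P ^ k) σ) atTop (nhds P) := by
  have h := (tendsto_weakSwapMap_pow_apply_of_trace_eq_zero l hcos hP (X := σ - P)
    (by rw [trace_sub, hσ, hPtr, sub_self])).const_add P
  rw [add_zero] at h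
  refine h.congr fun k => ?_
  rw [map_sub, Module.End.coe_pow, Function.iterate_fixed (weakSwapMap_apply_self l hPtr) k,
    ← Module.End.coe_pow, add_sub_cancel]

end Convergence

theorem weak_swap_fidelity_and_convergence_general {d : ℕ} (l : ℝ)
    (T : Fin d → ℂ) (hT : star T ⬝ᵥ T = 1)
    (ρ : Matrix (Fin d) (Fin d) ℂ) (hρtr : ρ.trace = 1) :
    let U : Matrix (Fin d × Fin d) (Fin d × Fin d) ℂ :=
      NormedSpace.exp ((-Complex.I * (l : ℂ)) • swapOp d)
    let chan : Matrix (Fin d) (Fin d) ℂ → Matrix (Fin d) (Fin d) ℂ :=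
      fun σ => ptraceControl (U * (σ ⊗ₖ vecMulVec T (star T)) * Uᴴ)
    (∀ n : ℕ, star T ⬝ᵥ (chan^[n] ρ *ᵥ T) =
      1 - (1 - star T ⬝ᵥ (ρ *ᵥ T)) * ((Real.cos l : ℂ)) ^ (2 * n)) ∧
    (Real.cos l ^ 2 < 1 →
      Tendsto (fun n => chan^[n] ρ) atTop (nhds (vecMulVec T (star T)))) := by
  intro U chan
  have hPtr : (vecMulVec T (star T)).trace = 1 := by rw [trace_vecMulVec_star_self, hT]
  have hiter (n : ℕ) : chan^[n] = ⇑(weakSwapMap l (vecMulVec T (star T)) ^ n) := by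
    rw [Module.End.coe_pow]
    congr
    funext σ
    exact ptraceControl_exp_swapOp_conj_kronecker l hPtr σ
  simp only [hiter]
  refine ⟨dotProduct_weakSwapMap_pow_mulVec hT l hρtr, fun hcos => ?_⟩
  have hP : vecMulVec T (star T) * vecMulVec T (star T) = vecMulVec T (star T) := by
    rw [vecMulVec_mul_vecMulVec, hT, one_smul]
  exact tendsto_weakSwapMap_pow l hcos hP hPtr hρtr

/-- **Example 2 (fidelity gain and convergence).** For the weak-swap channel
`$(ρ) = Tr_c[exp(−iλS) (ρ ⊗ |T⟩⟨T|) exp(−iλS)ᴴ]` with unit target vector `T`, every density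
operator `ρ` satisfies `F($ⁿ(ρ), T) = 1 − (1 − F(ρ, T)) cos^{2n}λ` for all `n`; in particular,
if `cos²λ < 1` then the iterates `$ⁿ(ρ)` converge to `|T⟩⟨T|`. -/
theorem weak_swap_fidelity_and_convergence {d : ℕ} (l : ℝ)
    (T : Fin d → ℂ) (hT : star T ⬝ᵥ T = 1)
    (ρ : Matrix (Fin d) (Fin d) ℂ) (hρ : ρ.PosSemidef) (hρtr : ρ.trace = 1) :
    let U : Matrix (Fin d × Fin d) (Fin d × Fin d) ℂ :=
      NormedSpace.exp ((-Complex.I * (l : ℂ)) • swapOp d)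
    let chan : Matrix (Fin d) (Fin d) ℂ → Matrix (Fin d) (Fin d) ℂ :=
      fun σ => ptraceControl (U * (σ ⊗ₖ vecMulVec T (star T)) * Uᴴ)
    (∀ n : ℕ, star T ⬝ᵥ (chan^[n] ρ *ᵥ T) =
      1 - (1 - star T ⬝ᵥ (ρ *ᵥ T)) * ((Real.cos l : ℂ)) ^ (2 * n)) ∧
    (Real.cos l ^ 2 < 1 →
      Tendsto (fun n => chan^[n] ρ) atTop (nhds (vecMulVec T (star T)))) :=
  weak_swap_fidelity_and_convergence_general l T hT ρ hρtr
end
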